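/- arXiv:1612.08762 — 13 statements merged into one kernel-verified Lean document; each statement's English description precedes it below -/
import Mathlib

section
/- Let K ⊆ X be a nonempty subset. Then Δ₁⁺(x) ≠ ∅ for every x ∈ X if and only if K has property G. -/
variable {A : Type*}

/-- The shift map on `X = ℕ → A`, deleting the last symbol `x 0`. -/
def shiftMap : (ℕ → A) → (ℕ → A) := fun x n => x (n + 1)

/-- The extension `(x, a)` of the sequence `x` by the symbol `a`. -/
def extend (x : ℕ → A) (a : A) : ℕ → A := fun n => Nat.casesOn n a x

/-- The exit set `E_K` of a set `K ⊆ X`. -/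
def exitSet (K : Set (ℕ → A)) : Set (ℕ → A) := {x | x ∉ K ∧ shiftMap x ∈ K}

/-- Property `G`: there is no `x` with `(x, a)` in the closure of `E_K` for every `a`. -/
def PropertyG [TopologicalSpace A] (K : Set (ℕ → A)) : Prop :=
  ¬ ∃ x : ℕ → A, ∀ a : A, extend x a ∈ closure (exitSet K)

/-- A subshift: closed, nonempty and `Θ(K) = K`. -/
def IsSubshift [TopologicalSpace A] (K : Set (ℕ → A)) : Prop :=
  IsClosed K ∧ K.Nonempty ∧ shiftMap '' K = K

/-- A continuous `g`-function: `0 ≤ g ≤ 1` and the unconditional sum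
`∑_{a ∈ A} g((x,a)) = 1` for every `x`. -/
def IsGFunction [TopologicalSpace A] (g : (ℕ → A) → ℝ) : Prop :=
  Continuous g ∧ (∀ x, 0 ≤ g x) ∧ (∀ x, g x ≤ 1) ∧
    ∀ x : ℕ → A, HasSum (fun a : A => g (extend x a)) 1

/-- `K` is invariant for `g` if `g` vanishes on the exit set of `K`. -/
def InvariantFor (K : Set (ℕ → A)) (g : (ℕ → A) → ℝ) : Prop :=
  ∀ x ∈ exitSet K, g x = 0

/-- The word `w` (a nonempty finite tuple) appears in `x`. -/
def Appears (w : List A) (x : ℕ → A) : Prop :=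
  ∃ i : ℕ, ∀ k : ℕ, ∀ h : k < w.length, x (i + k) = w.get ⟨k, h⟩

/-- `X_F`: the set of all `x` in which no word of `F` appears. -/
def XofF (F : Set (List A)) : Set (ℕ → A) := {x | ∀ w ∈ F, ¬ Appears w x}

/-- A subshift of finite type: `K = X_F` for a finite set `F` of (nonempty) words. -/
def IsFiniteType (K : Set (ℕ → A)) : Prop :=
  ∃ F : Set (List A), F.Finite ∧ (∀ w ∈ F, w ≠ []) ∧ K = XofF F

lemma mem_closure_pi_iff [TopologicalSpace A] [DiscreteTopology A]
    {S : Set (ℕ → A)} {x : ℕ → A} :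
    x ∈ closure S ↔ ∀ n : ℕ, ∃ y ∈ S, ∀ k ≤ n, y k = x k := by
  constructor
  · intro hx n
    have hopen : IsOpen {y : ℕ → A | ∀ k ≤ n, y k = x k} := by
      have : {y : ℕ → A | ∀ k ≤ n, y k = x k} =
          ⋂ k ∈ Finset.range (n + 1), (fun y : ℕ → A => y k) ⁻¹' {x k} := by
        ext y
        simp [Nat.lt_succ_iff]
      rw [this]
      exact isOpen_biInter_finset fun k _ =>
        (continuous_apply k).isOpen_preimage _ (isOpen_discrete _)
    rcases mem_closure_iff.1 hx _ hopen (fun k _ => rfl) with ⟨y, hy1, hy2⟩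
    exact ⟨y, hy2, hy1⟩
  · intro h
    rw [mem_closure_iff]
    intro o ho hxo
    rcases isOpen_pi_iff.1 ho x hxo with ⟨I, u, hu, hsub⟩
    rcases h (I.sup id) with ⟨y, hyS, hy⟩
    refine ⟨y, hsub fun i hi => ?_, hyS⟩
    rw [hy i (Finset.le_sup (f := id) hi)]
    exact (hu i hi).2

theorem delta_nonempty_iff_propertyG
    [Nonempty A] [Countable A] [TopologicalSpace A] [DiscreteTopology A]
    (K : Set (ℕ → A)) (hK : K.Nonempty) :
    (∀ x : ℕ → A, ∃ a : A, ∃ n : ℕ,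
        ∀ x' ∈ K, (∀ k ≤ n, x' k = x k) → extend x' a ∈ K) ↔
      PropertyG K := by
  constructor
  · intro h
    rintro ⟨x, hx⟩
    rcases h x with ⟨a, n, hn⟩
    rcases mem_closure_pi_iff.1 (hx a) (n + 1) with ⟨y, ⟨hyK, hyS⟩, hy⟩
    apply hyK
    have hext : extend (shiftMap y) a = y := by
      funext m
      cases m with
      | zero => exact (hy 0 (Nat.zero_le _)).symm
      | succ m => rfl
    rw [← hext]
    refine hn (shiftMap y) hyS fun k hk => ?_
    exact hy (k + 1) (Nat.succ_le_succ hk)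
  · intro hG x
    by_contra h
    push_neg at h
    apply hG
    refine ⟨x, fun a => ?_⟩
    rw [mem_closure_pi_iff]
    intro n
    cases n with
    | zero =>
        rcases h a 0 with ⟨x', hx'K, _, hx'a⟩
        exact ⟨extend x' a, ⟨hx'a, hx'K⟩, fun k hk => by
          interval_cases k; rfl⟩
    | succ n =>
        rcases h a n with ⟨x', hx'K, hagree, hx'a⟩
        refine ⟨extend x' a, ⟨hx'a, hx'K⟩, fun k hk => ?_⟩
        cases k with
        | zero => rfl
        | succ k => exact hagree k (Nat.le_of_succ_le_succ hk)
end

section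
/- Assume A is finite. For a subshift K ⊆ X, the following are equivalent: (i) K is of finite type; (ii) E_K is closed; (iii) K ∩ closure(E_K) = ∅. -/
variable {A : Type*}

lemma continuous_shiftMap [TopologicalSpace A] : Continuous (shiftMap (A := A)) :=
  continuous_pi fun n => continuous_apply (n + 1)

lemma shift_extend (x : ℕ → A) (a : A) : shiftMap (extend x a) = x := rfl

lemma isClosed_cyl [TopologicalSpace A] [T1Space A] (w : List A) :
    IsClosed {x : ℕ → A | ∀ k : ℕ, ∀ h : k < w.length, x k = w.get ⟨k, h⟩} := by
  have : {x : ℕ → A | ∀ k : ℕ, ∀ h : k < w.length, x k = w.get ⟨k, h⟩}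
      = ⋂ k : Fin w.length, {x : ℕ → A | x k = w.get k} := by
    ext x; simp only [Set.mem_iInter, Set.mem_setOf_eq]
    exact ⟨fun H k => H k k.2, fun H k h => H ⟨k, h⟩⟩
  rw [this]
  exact isClosed_iInter fun k => isClosed_singleton.preimage (continuous_apply (k : ℕ))

lemma shift_iter_apply (x : ℕ → A) (i n : ℕ) : (shiftMap^[i] x) n = x (n + i) := by
  induction i generalizing x n with
  | zero => rfl
  | succ i ih =>
    rw [Function.iterate_succ_apply, ih]
    show x (n + i + 1) = x (n + (i + 1)); ring_nf

lemma glue [TopologicalSpace A] (K : Set (ℕ → A)) (M : ℕ)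
    (hsep : ∀ y ∈ K, ∀ z ∈ closure (exitSet K), ∃ k < M, y k ≠ z k) :
    ∀ (j : ℕ) (x : ℕ → A), (∀ i, ∃ y ∈ K, ∀ k < M, y k = x (i + k)) →
      ∃ z ∈ K, ∀ k < M + j, z k = x k := by
  intro j
  induction j with
  | zero =>
    intro x H
    obtain ⟨y, hyK, hy⟩ := H 0
    exact ⟨y, hyK, fun k hk => by simpa using hy k (by simpa using hk)⟩
  | succ j ih =>
    intro x H
    obtain ⟨w, hwK, hw⟩ := ih (shiftMap x) (fun i => by
      obtain ⟨y, hyK, hy⟩ := H (i + 1)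
      refine ⟨y, hyK, fun k hk => ?_⟩
      rw [hy k hk]; show x (i + 1 + k) = x (i + k + 1); ring_nf)
    set z := extend w (x 0) with hz
    have hzx : ∀ k < M + (j + 1), z k = x k := by
      intro k hk
      cases k with
      | zero => rfl
      | succ k =>
        show w k = x (k + 1)
        rw [hw k (by omega)]; rfl
    by_cases hzK : z ∈ K
    · exact ⟨z, hzK, hzx⟩
    · exfalso
      have hzE : z ∈ exitSet K := ⟨hzK, by rw [hz, shift_extend]; exact hwK⟩
      obtain ⟨y, hyK, hy⟩ := H 0
      obtain ⟨k, hkM, hne⟩ := hsep y hyK z (subset_closure hzE)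
      apply hne
      rw [hy k hkM, hzx k (by omega)]
      norm_num

theorem finiteType_iff_exitSet_closed_iff_disjoint
    [Nonempty A] [Finite A] [TopologicalSpace A] [DiscreteTopology A]
    (K : Set (ℕ → A)) (hK : IsSubshift K) :
    (IsFiniteType K ↔ IsClosed (exitSet K)) ∧
      (IsClosed (exitSet K) ↔ K ∩ closure (exitSet K) = ∅) := by
  obtain ⟨hKclosed, hKne, hKshift⟩ := hK
  have hshift_mem : ∀ x ∈ K, shiftMap x ∈ K := fun x hx => by
    rw [← hKshift]; exact Set.mem_image_of_mem _ hx
  have h23 : IsClosed (exitSet K) ↔ K ∩ closure (exitSet K) = ∅ := by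
    constructor
    · intro h
      rw [h.closure_eq]
      ext x
      simp only [Set.mem_inter_iff, Set.mem_empty_iff_false, iff_false, not_and]
      exact fun hx hx' => hx'.1 hx
    · intro h
      apply isClosed_of_closure_subset
      intro x hx
      refine ⟨fun hxK => ?_, ?_⟩
      · rw [Set.eq_empty_iff_forall_notMem] at h
        exact h x ⟨hxK, hx⟩
      · have h1 : shiftMap '' closure (exitSet K) ⊆ closure (shiftMap '' exitSet K) :=
          image_closure_subset_closure_image continuous_shiftMap
        have h2 : shiftMap '' exitSet K ⊆ K := by
          rintro _ ⟨y, hy, rfl⟩; exact hy.2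
        have h3 := h1 (Set.mem_image_of_mem _ hx)
        exact hKclosed.closure_eq ▸ (closure_mono h2 h3)
  have h12 : IsFiniteType K → IsClosed (exitSet K) := by
    rintro ⟨F, hFfin, hFne, hKF⟩
    have heq : exitSet K = shiftMap ⁻¹' K ∩
        ⋃ w ∈ F, {x : ℕ → A | ∀ k : ℕ, ∀ h : k < w.length, x k = w.get ⟨k, h⟩} := by
      ext x
      constructor
      · rintro ⟨hxK, hΘ⟩
        refine ⟨hΘ, ?_⟩
        rw [hKF] at hxK
        simp only [XofF, Set.mem_setOf_eq, not_forall] at hxK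
        obtain ⟨w, hwF, hap⟩ := hxK
        obtain ⟨i, hi⟩ := not_not.mp hap
        rcases i with _ | j
        · exact Set.mem_biUnion hwF (fun k h => by simpa using hi k h)
        · exfalso
          rw [hKF] at hΘ
          apply hΘ w hwF
          refine ⟨j, fun k h => ?_⟩
          rw [← hi k h]
          show x (j + k + 1) = x (j + 1 + k); ring_nf
      · rintro ⟨hΘ, hw⟩
        obtain ⟨w, hwF, hcyl⟩ := Set.mem_iUnion₂.mp hw
        refine ⟨fun hxK => ?_, hΘ⟩
        rw [hKF] at hxK
        exact hxK w hwF ⟨0, fun k h => by simpa using hcyl k h⟩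
    rw [heq]
    exact (hKclosed.preimage continuous_shiftMap).inter
      (hFfin.isClosed_biUnion fun w _ => isClosed_cyl w)
  have h31 : K ∩ closure (exitSet K) = ∅ → IsFiniteType K := by
    intro hdisj
    -- Step A : a uniform separation constant
    obtain ⟨M, hM⟩ : ∃ M, ∀ y ∈ K, ∀ z ∈ closure (exitSet K), ∃ k < M, y k ≠ z k := by
      by_contra hcon
      push_neg at hcon
      set V : ℕ → Set ((ℕ → A) × (ℕ → A)) := fun n =>
        (K ×ˢ closure (exitSet K)) ∩ {p | ∀ k < n, p.1 k = p.2 k} with hV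
      have hVclosed : ∀ n, IsClosed (V n) := by
        intro n
        refine (hKclosed.prod isClosed_closure).inter ?_
        have : {p : (ℕ → A) × (ℕ → A) | ∀ k < n, p.1 k = p.2 k}
            = ⋂ k ∈ Set.Iio n, {p : (ℕ → A) × (ℕ → A) | p.1 k = p.2 k} := by
          ext p; simp [Set.mem_iInter]
        rw [this]
        exact isClosed_biInter fun k _ => isClosed_eq
          ((continuous_apply k).comp continuous_fst)
          ((continuous_apply k).comp continuous_snd)
      have hVmono : ∀ n, V (n + 1) ⊆ V n := by
        intro n p hp
        exact ⟨hp.1, fun k hk => hp.2 k (by omega)⟩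
      have hVne : ∀ n, (V n).Nonempty := by
        intro n
        obtain ⟨y, hyK, z, hz, hyz⟩ := hcon n
        exact ⟨(y, z), ⟨⟨hyK, hz⟩, fun k hk => hyz k hk⟩⟩
      obtain ⟨⟨y, z⟩, hmem⟩ :=
        IsCompact.nonempty_iInter_of_sequence_nonempty_isCompact_isClosed V hVmono hVne
          ((hVclosed 0).isCompact) hVclosed
      have hyz : y = z := by
        funext k
        exact (Set.mem_iInter.mp hmem (k + 1)).2 k (by omega)
      have h0 := Set.mem_iInter.mp hmem 0
      rw [Set.eq_empty_iff_forall_notMem] at hdisj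
      exact hdisj y ⟨h0.1.1, hyz ▸ h0.1.2⟩
    set N := M + 1 with hN
    have hsep : ∀ y ∈ K, ∀ z ∈ closure (exitSet K), ∃ k < N, y k ≠ z k := by
      intro y hy z hz
      obtain ⟨k, hk, hne⟩ := hM y hy z hz
      exact ⟨k, by omega, hne⟩
    set F : Set (List A) := {w | w.length = N ∧
        ∀ y ∈ K, ¬ ∀ k : ℕ, ∀ h : k < w.length, y k = w.get ⟨k, h⟩} with hF
    refine ⟨F, ?_, ?_, ?_⟩
    · exact (List.finite_length_eq A N).subset fun w hw => hw.1
    · intro w hw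
      have := hw.1
      intro hnil
      rw [hnil] at this
      simp [hN] at this
    · apply Set.Subset.antisymm
      · -- K ⊆ XofF F
        intro x hx w hw ⟨i, hi⟩
        have hxi : shiftMap^[i] x ∈ K := by
          clear hi
          induction i with
          | zero => exact hx
          | succ i ih => rw [Function.iterate_succ_apply']; exact hshift_mem _ ih
        exact hw.2 _ hxi fun k h => by rw [shift_iter_apply, Nat.add_comm]; exact hi k h
      · -- XofF F ⊆ K
        intro x hx
        have H : ∀ i, ∃ y ∈ K, ∀ k < N, y k = x (i + k) := by
          intro i
          have hlen : (List.ofFn (fun k : Fin N => x (i + (k : ℕ)))).length = N :=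
            List.length_ofFn
          have hwF : List.ofFn (fun k : Fin N => x (i + (k : ℕ))) ∉ F := by
            intro hmem
            refine hx _ hmem ⟨i, fun k h => ?_⟩
            rw [List.get_ofFn]
            rfl
          rw [hF, Set.mem_setOf_eq] at hwF
          push_neg at hwF
          obtain ⟨y, hyK, hy⟩ := hwF hlen
          refine ⟨y, hyK, fun k hk => ?_⟩
          have h2 := hy k (by rw [hlen]; exact hk)
          rw [h2, List.get_ofFn]
          rfl
        have hclo : x ∈ closure K := by
          choose z hzK hzx using fun j => glue K N hsep j x H
          refine mem_closure_of_tendsto (f := z) (b := Filter.atTop) ?_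
            (Filter.Eventually.of_forall hzK)
          rw [tendsto_pi_nhds]
          intro n
          refine Filter.Tendsto.congr'
            (f₁ := fun _ => x n) ?_ tendsto_const_nhds
          filter_upwards [Filter.eventually_ge_atTop (n + 1)] with j hj
          exact (hzx j n (by omega)).symm
        rwa [hKclosed.closure_eq] at hclo
  exact ⟨⟨h12, fun h2 => h31 (h23.mp h2)⟩, h23⟩
end

section
/- Let A be finite or countably infinite and let K ⊆ X be a subshift of finite type. Then E_K is closed and K ∩ closure(E_K) = ∅. -/
variable {A : Type*}

theorem finiteType_exitSet_closed_and_disjoint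
    [Nonempty A] [Countable A] [TopologicalSpace A] [DiscreteTopology A]
    (K : Set (ℕ → A)) (hK : IsSubshift K) (hft : IsFiniteType K) :
    IsClosed (exitSet K) ∧ K ∩ closure (exitSet K) = ∅ := by
  obtain ⟨hKclosed, -, -⟩ := hK
  obtain ⟨F, hFfin, -, rfl⟩ := hft
  have hcont : Continuous (shiftMap (A := A)) :=
    continuous_pi fun n => continuous_apply (n + 1)
  have hE : exitSet (XofF F) =
      shiftMap ⁻¹' (XofF F) ∩
        ⋃ w ∈ F, {x : ℕ → A | ∀ k (h : k < w.length), x k = w.get ⟨k, h⟩} := by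
    ext x
    constructor
    · rintro ⟨hx, hsx⟩
      refine ⟨hsx, ?_⟩
      simp only [XofF, Set.mem_setOf_eq, not_forall] at hx
      obtain ⟨w, hwF, hap⟩ := hx
      rw [not_not] at hap
      obtain ⟨i, hi⟩ := hap
      rcases i with _ | j
      · exact Set.mem_biUnion hwF fun k h => by simpa using hi k h
      · exact absurd ⟨j, fun k h => by
          show x (j + k + 1) = _
          rw [show j + k + 1 = j + 1 + k by omega]; exact hi k h⟩ (hsx w hwF)
    · rintro ⟨hsx, hx⟩
      obtain ⟨w, hwF, hw⟩ := Set.mem_iUnion₂.mp hx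
      refine ⟨fun h => h w hwF ⟨0, fun k hk => by simpa using hw k hk⟩, hsx⟩
  have hclosed : IsClosed (exitSet (XofF F)) := by
    rw [hE]
    refine (hKclosed.preimage hcont).inter (hFfin.isClosed_biUnion fun w _ => ?_)
    have : {x : ℕ → A | ∀ k (h : k < w.length), x k = w.get ⟨k, h⟩} =
        ⋂ k : Fin w.length, {x : ℕ → A | x k = w.get k} := by
      ext x
      simp only [Set.mem_setOf_eq, Set.mem_iInter]
      exact ⟨fun h k => h k k.2, fun h k hk => h ⟨k, hk⟩⟩
    rw [this]
    exact isClosed_iInter fun k => isClosed_eq (continuous_apply _) continuous_const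
  refine ⟨hclosed, ?_⟩
  rw [hclosed.closure_eq]
  ext x
  simp only [Set.mem_inter_iff, Set.mem_empty_iff_false, iff_false, not_and]
  exact fun hx hex => hex.1 hx
end

section
/- Assume A is finite. If K ⊆ X is a subshift with K ∩ closure(E_K) = ∅, then K is of finite type. -/
variable {A : Type*}

section Aux

/-- The cylinder set of sequences agreeing with `y` on the first `n` coordinates. -/
def cylSet (y : ℕ → A) (n : ℕ) : Set (ℕ → A) := {z | ∀ k < n, z k = y k}

/-- The word `(x i, x (i+1), …, x (i+N-1))`. -/
def wordOf (x : ℕ → A) (i N : ℕ) : List A := (List.range N).map fun k => x (i + k)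

lemma wordOf_length (x : ℕ → A) (i N : ℕ) : (wordOf x i N).length = N := by
  simp [wordOf]

lemma wordOf_get (x : ℕ → A) (i N k : ℕ) (h : k < (wordOf x i N).length) :
    (wordOf x i N).get ⟨k, h⟩ = x (i + k) := by
  simp [wordOf]

lemma shift_iter_mem {K : Set (ℕ → A)} (hΘ : shiftMap '' K = K) :
    ∀ (i : ℕ) (x : ℕ → A), x ∈ K → (fun n => x (n + i)) ∈ K := by
  intro i
  induction i with
  | zero => intro x hx; simpa using hx
  | succ i ih =>
    intro x hx
    have h1 : (fun n => x (n + (i + 1))) = shiftMap (fun n => x (n + i)) := by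
      funext n
      show x (n + (i + 1)) = x (n + 1 + i)
      congr 1; omega
    rw [h1, ← hΘ]
    exact Set.mem_image_of_mem _ (ih x hx)

variable [TopologicalSpace A] [DiscreteTopology A]

lemma isOpen_cylSet (y : ℕ → A) (n : ℕ) : IsOpen (cylSet y n) := by
  have : cylSet y n = ⋂ k ∈ Finset.range n, (fun z : ℕ → A => z k) ⁻¹' {y k} := by
    ext z; simp [cylSet]
  rw [this]
  exact isOpen_biInter_finset fun k _ =>
    IsOpen.preimage (continuous_apply k) (isOpen_discrete ({y k} : Set A))

lemma exists_cylSet_subset {x : ℕ → A} {U : Set (ℕ → A)} (hU : U ∈ nhds x) :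
    ∃ n, cylSet x n ⊆ U := by
  rw [nhds_pi, Filter.mem_pi] at hU
  obtain ⟨I, hI, t, ht, hsub⟩ := hU
  obtain ⟨n, hn⟩ := hI.bddAbove
  refine ⟨n + 1, fun z hz => hsub fun i hi => ?_⟩
  have h1 : z i = x i := hz i (Nat.lt_succ_of_le (hn hi))
  rw [h1]
  have h2 := ht i
  rwa [nhds_discrete, Filter.mem_pure] at h2

lemma mem_of_agree_closure {K : Set (ℕ → A)} (hcl : IsClosed K) {x : ℕ → A}
    (hx : ∀ m, ∃ y ∈ K, ∀ k < m, y k = x k) : x ∈ K := by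
  rw [← hcl.closure_eq, mem_closure_iff_nhds]
  intro U hU
  obtain ⟨n, hn⟩ := exists_cylSet_subset hU
  obtain ⟨y, hyK, hy⟩ := hx n
  exact ⟨y, hn (fun k hk => hy k hk), hyK⟩

lemma exists_uniform_sep [Finite A] {K C : Set (ℕ → A)} (hKcl : IsClosed K)
    (hC : IsClosed C) (hdisj : K ∩ C = ∅) :
    ∃ N, 0 < N ∧ ∀ y ∈ K, ∀ z : ℕ → A, (∀ k < N, z k = y k) → z ∉ C := by
  have hKc : IsCompact K := hKcl.isCompact
  have hchoice : ∀ y ∈ K, ∃ n, cylSet y n ⊆ Cᶜ := by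
    intro y hy
    have : Cᶜ ∈ nhds y := hC.isOpen_compl.mem_nhds (by
      intro hyC
      have : y ∈ K ∩ C := ⟨hy, hyC⟩
      rw [hdisj] at this
      exact this)
    exact exists_cylSet_subset this
  choose! n hn using hchoice
  have hcover : K ⊆ ⋃ y ∈ K, cylSet y (n y) := fun y hy =>
    Set.mem_biUnion hy (fun k _ => rfl)
  obtain ⟨b, hbK, hbfin, hbcov⟩ := hKc.elim_finite_subcover_image
    (fun y _ => isOpen_cylSet y (n y)) hcover
  obtain ⟨N0, hN0⟩ := (hbfin.image n).bddAbove
  refine ⟨N0 + 1, Nat.succ_pos _, fun y hy z hz hzC => ?_⟩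
  obtain ⟨y0, hy0b, hy0⟩ := Set.mem_iUnion₂.mp (hbcov hy)
  have hny0 : n y0 ≤ N0 := hN0 (Set.mem_image_of_mem n hy0b)
  have hz0 : z ∈ cylSet y0 (n y0) := by
    intro k hk
    have : z k = y k := hz k (by omega)
    rw [this]; exact hy0 k hk
  exact hn y0 (hbK hy0b) hz0 hzC

end Aux

theorem disjoint_closure_exitSet_imp_finiteType
    [Nonempty A] [Finite A] [TopologicalSpace A] [DiscreteTopology A]
    (K : Set (ℕ → A)) (hK : IsSubshift K)
    (h : K ∩ closure (exitSet K) = ∅) :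
    IsFiniteType K := by
  obtain ⟨hKcl, hKne, hΘ⟩ := hK
  obtain ⟨N, hNpos, sep⟩ := exists_uniform_sep (A := A) hKcl isClosed_closure h
  set F : Set (List A) :=
    {w | w.length = N ∧ ∀ y ∈ K, ∃ k, ∃ hk : k < w.length, y k ≠ w.get ⟨k, hk⟩} with hF
  refine ⟨F, ?_, ?_, ?_⟩
  · exact (List.finite_length_eq A N).subset fun w hw => hw.1
  · intro w hw
    intro hnil
    have := hw.1
    rw [hnil] at this
    simp at this
    omega
  · apply Set.eq_of_subset_of_subset
    · -- K ⊆ XofF F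
      intro x hx w hwF ⟨i, hi⟩
      have hyK : (fun n => x (n + i)) ∈ K := shift_iter_mem hΘ i x hx
      obtain ⟨k, hk, hne⟩ := hwF.2 _ hyK
      exact hne (by rw [← hi k hk]; congr 1; omega)
    · -- XofF F ⊆ K
      intro x hx
      apply mem_of_agree_closure hKcl
      intro m
      -- words appearing in x are not in F
      have hnotF : ∀ i : ℕ, ∃ y ∈ K, ∀ k < N, y k = x (i + k) := by
        intro i
        have happ : Appears (wordOf x i N) x := by
          refine ⟨i, fun k hk => ?_⟩
          rw [wordOf_get]
        have hw : wordOf x i N ∉ F := fun hmem => hx _ hmem happ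
        simp only [hF, Set.mem_setOf_eq] at hw
        have hw2 := not_and.mp hw (wordOf_length x i N)
        push_neg at hw2
        obtain ⟨y, hyK, hy⟩ := hw2
        refine ⟨y, hyK, fun k hk => ?_⟩
        have hk' : k < (wordOf x i N).length := by rw [wordOf_length]; exact hk
        have h2 := hy k hk'
        rwa [wordOf_get] at h2
      have claim : ∀ j, j ≤ m → ∃ y ∈ K, ∀ k < N + j, y k = x (m - j + k) := by
        intro j
        induction j with
        | zero =>
          intro _
          obtain ⟨y, hyK, hy⟩ := hnotF m
          exact ⟨y, hyK, fun k hk => by simpa using hy k (by omega)⟩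
        | succ j ih =>
          intro hj
          obtain ⟨y, hyK, hy⟩ := ih (by omega)
          set y' := extend y (x (m - (j + 1))) with hy'def
          have hshift : shiftMap y' = y := rfl
          have hagree : ∀ k < N + (j + 1), y' k = x (m - (j + 1) + k) := by
            intro k hk
            cases k with
            | zero => simp [hy'def, extend]
            | succ k' =>
              have h1 : y' (k' + 1) = y k' := rfl
              rw [h1, hy k' (by omega)]
              congr 1
              omega
          refine ⟨y', ?_, hagree⟩
          by_contra hy'K
          have hexit : y' ∈ exitSet K := ⟨hy'K, by rw [hshift]; exact hyK⟩
          obtain ⟨z, hzK, hz⟩ := hnotF (m - (j + 1))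
          have : y' ∉ closure (exitSet K) := by
            apply sep z hzK
            intro k hk
            rw [hagree k (by omega), hz k hk]
          exact this (subset_closure hexit)
      obtain ⟨y, hyK, hy⟩ := claim m le_rfl
      exact ⟨y, hyK, fun k hk => by simpa using hy k (by omega)⟩
end

section
/- Let K ⊆ X be a nonempty subset and let g be a g-function for which K is invariant. Then g(x) = 0 for every x ∈ closure(E_K), and consequently K has property G. -/
variable {A : Type*}

theorem invariant_g_vanishes_on_closure_and_propertyG
    [Nonempty A] [Countable A] [TopologicalSpace A] [DiscreteTopology A]
    (K : Set (ℕ → A)) (hK : K.Nonempty)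
    (g : (ℕ → A) → ℝ) (hg : IsGFunction g) (hinv : InvariantFor K g) :
    (∀ x ∈ closure (exitSet K), g x = 0) ∧ PropertyG K := by
  obtain ⟨hcont, _, _, hsum⟩ := hg
  have hcl : closure (exitSet K) ⊆ g ⁻¹' {0} := by
    apply closure_minimal _ (isClosed_singleton.preimage hcont)
    intro x hx
    exact hinv x hx
  have h1 : ∀ x ∈ closure (exitSet K), g x = 0 := fun x hx => hcl hx
  refine ⟨h1, ?_⟩
  rintro ⟨x, hx⟩
  have : HasSum (fun a : A => g (extend x a)) 0 := by
    have : (fun a : A => g (extend x a)) = fun _ => (0 : ℝ) := by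
      funext a; exact h1 _ (hx a)
    rw [this]; exact hasSum_zero
  exact one_ne_zero ((hsum x).unique this)
end

section
/- Let K ⊆ X be a nonempty subset with property G. Then there exists a g-function g such that {x ∈ X : g(x) = 0} = closure(E_K); in particular K is invariant for g. -/
variable {A : Type*}

theorem propertyG_imp_strict_gFunction
    [Nonempty A] [Countable A] [TopologicalSpace A] [DiscreteTopology A]
    (K : Set (ℕ → A)) (hK : K.Nonempty) (hG : PropertyG K) :
    ∃ g : (ℕ → A) → ℝ, IsGFunction g ∧
      {x : ℕ → A | g x = 0} = closure (exitSet K) ∧ InvariantFor K g := by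
  classical
  letI : MetricSpace (ℕ → A) := TopologicalSpace.metrizableSpaceMetric (ℕ → A)
  obtain ⟨ι, hι⟩ := exists_injective_nat A
  set w : A → ℝ := fun a => (1/2 : ℝ) ^ ι a with hw
  have hwpos : ∀ a, 0 < w a := fun a => by positivity
  have hwsum : Summable w :=
    (summable_geometric_of_lt_one (by norm_num) (by norm_num)).comp_injective hι
  set C : Set (ℕ → A) := closure (exitSet K) with hC
  -- the auxiliary bump function h
  obtain ⟨h, hcont, h0, h1, hzero, hpos⟩ :
      ∃ h : (ℕ → A) → ℝ, Continuous h ∧ (∀ y, 0 ≤ h y) ∧ (∀ y, h y ≤ 1) ∧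
        (∀ y, h y = 0 ↔ y ∈ C) ∧ (∀ x : ℕ → A, ∃ a, 0 < h (extend x a)) := by
    rcases Set.eq_empty_or_nonempty (exitSet K) with hE | hE
    · refine ⟨fun _ => 1, continuous_const, fun _ => zero_le_one, fun _ => le_refl 1, ?_, ?_⟩
      · intro y
        simp [hC, hE]
      · intro x; exact ⟨Classical.arbitrary A, one_pos⟩
    · have hCne : C.Nonempty := hE.closure
      have hCc : IsClosed C := isClosed_closure
      refine ⟨fun y => min 1 (Metric.infDist y C),
        (continuous_const.min (Metric.continuous_infDist_pt C)), ?_, ?_, ?_, ?_⟩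
      · intro y; exact le_min zero_le_one Metric.infDist_nonneg
      · intro y; exact min_le_left _ _
      · intro y
        constructor
        · intro hy
          rcases min_eq_iff.1 hy with h' | h'
          · exact absurd h'.1 one_ne_zero
          · exact (hCc.mem_iff_infDist_zero hCne).2 h'.1
        · intro hy
          have := (hCc.mem_iff_infDist_zero hCne).1 hy
          simp [this]
      · intro x
        have : ¬ ∀ a : A, extend x a ∈ C := fun hall => hG ⟨x, hall⟩
        push_neg at this
        obtain ⟨a, ha⟩ := this
        exact ⟨a, lt_min one_pos ((hCc.notMem_iff_infDist_pos hCne).1 ha)⟩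
  -- f and S
  set f : (ℕ → A) → ℝ := fun y => w (y 0) * h y with hf
  have hf0 : ∀ y, 0 ≤ f y := fun y => mul_nonneg (hwpos _).le (h0 y)
  have hfw : ∀ y, f y ≤ w (y 0) := fun y => by
    calc f y ≤ w (y 0) * 1 := mul_le_mul_of_nonneg_left (h1 y) (hwpos _).le
    _ = w (y 0) := mul_one _
  have hfcont : Continuous f := by
    apply Continuous.mul ?_ hcont
    exact (continuous_of_discreteTopology (f := w)).comp (continuous_apply 0)
  have hext : ∀ a : A, Continuous fun x : ℕ → A => extend x a := by
    intro a
    apply continuous_pi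
    intro n
    cases n with
    | zero => exact continuous_const
    | succ m => exact continuous_apply m
  have hextval : ∀ (x : ℕ → A) (a : A), (extend x a) 0 = a := fun _ _ => rfl
  have hshiftext : ∀ (x : ℕ → A) (a : A), shiftMap (extend x a) = x := fun x a => rfl
  have hyext : ∀ y : ℕ → A, extend (shiftMap y) (y 0) = y := by
    intro y; funext n; cases n <;> rfl
  set S : (ℕ → A) → ℝ := fun x => ∑' a : A, f (extend x a) with hS
  have hSsum : ∀ x : ℕ → A, Summable fun a : A => f (extend x a) := by
    intro x
    apply Summable.of_nonneg_of_le (fun a => hf0 _) (fun a => ?_) hwsum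
    calc f (extend x a) ≤ w ((extend x a) 0) := hfw _
    _ = w a := by rw [hextval]
  have hSpos : ∀ x : ℕ → A, 0 < S x := by
    intro x
    obtain ⟨a, ha⟩ := hpos x
    have h1' : 0 < f (extend x a) := mul_pos (hwpos _) ha
    have := Summable.le_tsum (hSsum x) a (fun b _ => hf0 _)
    exact lt_of_lt_of_le h1' this
  have hScont : Continuous S := by
    apply continuous_tsum (u := w) (fun a => hfcont.comp (hext a)) hwsum
    intro a x
    simp only [Function.comp]
    rw [Real.norm_of_nonneg (hf0 _)]
    calc f (extend x a) ≤ w ((extend x a) 0) := hfw _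
    _ = w a := by rw [hextval]
  have hshiftcont : Continuous (shiftMap : (ℕ → A) → ℕ → A) :=
    continuous_pi fun n => continuous_apply (n + 1)
  -- the g function
  refine ⟨fun y => f y / S (shiftMap y), ⟨?_, ?_, ?_, ?_⟩, ?_, ?_⟩
  · exact hfcont.div (hScont.comp hshiftcont) fun y => (hSpos _).ne'
  · intro y; exact div_nonneg (hf0 y) (hSpos _).le
  · intro y
    rw [div_le_one (hSpos _)]
    have : f y = f (extend (shiftMap y) (y 0)) := by rw [hyext]
    rw [this]
    exact Summable.le_tsum (hSsum (shiftMap y)) _ (fun b _ => hf0 _)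
  · intro x
    have h1 : HasSum (fun a : A => f (extend x a)) (S x) := (hSsum x).hasSum
    have h2 := h1.div_const (S x)
    rw [div_self (hSpos x).ne'] at h2
    exact h2
  · ext y
    simp only [Set.mem_setOf_eq]
    rw [div_eq_zero_iff]
    constructor
    · rintro (hy | hy)
      · rcases mul_eq_zero.1 hy with h' | h'
        · exact absurd h' (hwpos _).ne'
        · exact (hzero y).1 h'
      · exact absurd hy (hSpos _).ne'
    · intro hy
      left
      rw [hf]
      simp [(hzero y).2 hy]
  · intro x hx
    have hxC : x ∈ C := subset_closure hx
    rw [div_eq_zero_iff]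
    left
    simp [hf, (hzero x).2 hxC]
end

section
/- Let A be finite or countably infinite and let K ⊆ X be a subshift. The following are equivalent: (i) K has a strictly positive g-function; (ii) K ∩ closure(E_K) = ∅; (iii) E_K is closed. -/
variable {A : Type*}

lemma extend_shift (y : ℕ → A) : extend (shiftMap y) (y 0) = y := by
  funext n; cases n <;> rfl

lemma continuous_extend [TopologicalSpace A] (a : A) :
    Continuous fun x : ℕ → A => extend x a := by
  apply continuous_pi
  intro n
  cases n with
  | zero => exact continuous_const
  | succ m => exact continuous_apply m

lemma construct_g [Nonempty A] [Countable A] [TopologicalSpace A] [DiscreteTopology A]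
    (K C : Set (ℕ → A)) (hK : IsSubshift K)
    (hEC : exitSet K ⊆ C) (hdisj : K ∩ C = ∅) (hCK : C ⊆ shiftMap ⁻¹' K)
    (f : (ℕ → A) → ℝ) (hfc : Continuous f) (hf0 : ∀ y, 0 ≤ f y) (hf1 : ∀ y, f y ≤ 1)
    (hfC : ∀ y ∈ C, f y = 0) (hfpos : ∀ y, y ∉ C → 0 < f y) :
    ∃ g : (ℕ → A) → ℝ, IsGFunction g ∧ InvariantFor K g ∧ ∀ x ∈ K, 0 < g x := by
  obtain ⟨e, he⟩ := exists_injective_nat A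
  set w : A → ℝ := fun a => (1 / 2 : ℝ) ^ e a with hw
  have hwpos : ∀ a, 0 < w a := fun a => by positivity
  have hwsum : Summable w := summable_geometric_two.comp_injective he
  set F : (ℕ → A) → A → ℝ := fun x a => w a * f (extend x a) with hF
  have hFnn : ∀ x a, 0 ≤ F x a := fun x a => mul_nonneg (hwpos a).le (hf0 _)
  have hFle : ∀ x a, F x a ≤ w a := fun x a => by
    have := mul_le_mul_of_nonneg_left (hf1 (extend x a)) (hwpos a).le
    simpa using this
  have hFsum : ∀ x, Summable (F x) := fun x =>
    hwsum.of_nonneg_of_le (hFnn x) (hFle x)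
  set D : (ℕ → A) → ℝ := fun x => ∑' a, F x a with hD
  have hDc : Continuous D := by
    apply continuous_tsum (u := w) (f := fun a x => F x a)
      (fun a => (continuous_const.mul (hfc.comp (continuous_extend a)))) hwsum
    intro a x
    rw [Real.norm_eq_abs, abs_of_nonneg (hFnn x a)]
    exact hFle x a
  have hDpos : ∀ x, 0 < D x := by
    intro x
    have : ∃ a, extend x a ∉ C := by
      by_contra h
      push_neg at h
      have hxK : x ∈ K := by
        have := hCK (h (Classical.arbitrary A))
        simpa [shift_extend] using this
      obtain ⟨y, hyK, hyx⟩ : ∃ y ∈ K, shiftMap y = x := by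
        have := hK.2.2
        rw [← this] at hxK
        obtain ⟨y, hy, h2⟩ := hxK
        exact ⟨y, hy, h2⟩
      have hyC : y ∈ C := by
        have := h (y 0)
        rwa [← hyx, extend_shift] at this
      exact Set.eq_empty_iff_forall_notMem.1 hdisj y ⟨hyK, hyC⟩
    obtain ⟨a, ha⟩ := this
    exact Summable.tsum_pos (hFsum x) (hFnn x) a (mul_pos (hwpos a) (hfpos _ ha))
  refine ⟨fun y => w (y 0) * f y / D (shiftMap y), ⟨?_, ?_, ?_, ?_⟩, ?_, ?_⟩
  · have h1 : Continuous fun y : ℕ → A => w (y 0) :=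
      (continuous_of_discreteTopology (f := w)).comp (continuous_apply 0)
    exact (h1.mul hfc).div (hDc.comp continuous_shiftMap)
      (fun y => (hDpos _).ne')
  · intro y
    exact div_nonneg (mul_nonneg (hwpos _).le (hf0 _)) (hDpos _).le
  · intro y
    rw [div_le_one (hDpos _)]
    have h2 := Summable.le_tsum (hFsum (shiftMap y)) (y 0) (fun j _ => hFnn _ j)
    simp only [hF, extend_shift] at h2
    exact h2
  · intro x
    have : (fun a : A => w ((extend x a) 0) * f (extend x a) / D (shiftMap (extend x a)))
        = fun a => F x a / D x := by
      funext a; rw [shift_extend]; rfl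
    rw [this]
    have h1 : HasSum (F x) (D x) := (hFsum x).hasSum
    simpa [div_self (hDpos x).ne'] using h1.div_const (D x)
  · intro x hx
    have hfx : f x = 0 := hfC x (hEC hx)
    simp only [hfx, mul_zero, zero_div]
  · intro x hxK
    have hxC : x ∉ C := fun h =>
      Set.eq_empty_iff_forall_notMem.1 hdisj x ⟨hxK, h⟩
    exact div_pos (mul_pos (hwpos _) (hfpos _ hxC)) (hDpos _)

theorem strictly_positive_iff_disjoint_iff_closed
    [Nonempty A] [Countable A] [TopologicalSpace A] [DiscreteTopology A]
    (K : Set (ℕ → A)) (hK : IsSubshift K) :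
    ((∃ g : (ℕ → A) → ℝ, IsGFunction g ∧ InvariantFor K g ∧ ∀ x ∈ K, 0 < g x) ↔
        K ∩ closure (exitSet K) = ∅) ∧
      (K ∩ closure (exitSet K) = ∅ ↔ IsClosed (exitSet K)) := by
  have hclos : closure (exitSet K) ⊆ shiftMap ⁻¹' K :=
    closure_minimal (fun x hx => hx.2) (hK.1.preimage continuous_shiftMap)
  constructor
  · constructor
    · rintro ⟨g, ⟨hgc, hg0, hg1, hgs⟩, hinv, hpos⟩
      rw [Set.eq_empty_iff_forall_notMem]
      rintro x ⟨hxK, hxC⟩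
      have hzero : closure (exitSet K) ⊆ {y | g y = 0} :=
        closure_minimal hinv (isClosed_eq hgc continuous_const)
      exact absurd (hzero hxC) (hpos x hxK).ne'
    · intro hdisj
      by_cases hC : (closure (exitSet K)).Nonempty
      · letI : PseudoMetricSpace (ℕ → A) :=
          TopologicalSpace.pseudoMetrizableSpacePseudoMetric _
        refine construct_g K (closure (exitSet K)) hK subset_closure hdisj hclos
          (fun y => min (Metric.infDist y (closure (exitSet K))) 1)
          ((Metric.continuous_infDist_pt _).min continuous_const)
          (fun y => le_min Metric.infDist_nonneg zero_le_one)
          (fun y => min_le_right _ _) ?_ ?_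
        · intro y hy
          show min (Metric.infDist y (closure (exitSet K))) 1 = 0
          rw [Metric.infDist_zero_of_mem hy]
          simp
        · intro y hy
          show 0 < min (Metric.infDist y (closure (exitSet K))) 1
          refine lt_min ?_ zero_lt_one
          rcases (Metric.infDist_nonneg (x := y)
            (s := closure (exitSet K))).lt_or_eq with h | h
          · exact h
          · exfalso
            apply hy
            have : y ∈ closure (closure (exitSet K)) :=
              (Metric.mem_closure_iff_infDist_zero hC).2 h.symm
            rwa [closure_closure] at this
      · rw [Set.not_nonempty_iff_eq_empty] at hC
        refine construct_g K (closure (exitSet K)) hK subset_closure hdisj hclos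
          (fun _ => 1) continuous_const (fun _ => zero_le_one) (fun _ => le_refl 1)
          ?_ (fun _ _ => zero_lt_one)
        intro y hy
        rw [hC] at hy
        exact absurd hy (Set.notMem_empty y)
  · constructor
    · intro hdisj
      have hsub : closure (exitSet K) ⊆ exitSet K := by
        intro x hx
        refine ⟨?_, hclos hx⟩
        intro hxK
        exact Set.eq_empty_iff_forall_notMem.1 hdisj x ⟨hxK, hx⟩
      exact isClosed_of_closure_subset hsub
    · intro hcl
      rw [hcl.closure_eq, Set.eq_empty_iff_forall_notMem]
      rintro x ⟨hxK, hxE⟩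
      exact hxE.1 hxK
end

section
/- Let K ⊆ X be a nonempty closed subset. Then every point of closure(E_K) that is not in E_K belongs to K; that is, closure(E_K) \ E_K ⊆ K. -/
variable {A : Type*}

theorem closure_exitSet_diff_subset
    [Nonempty A] [Countable A] [TopologicalSpace A] [DiscreteTopology A]
    (K : Set (ℕ → A)) (hne : K.Nonempty) (hcl : IsClosed K) :
    closure (exitSet K) \ exitSet K ⊆ K := by
  intro x ⟨hx, hnx⟩
  have hcont : Continuous (shiftMap : (ℕ → A) → (ℕ → A)) :=
    continuous_pi fun n => continuous_apply (n + 1)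
  have hsub : exitSet K ⊆ shiftMap ⁻¹' K := fun y hy => hy.2
  have hΘ : shiftMap x ∈ K := by
    have := closure_minimal hsub (hcl.preimage hcont) hx
    exact this
  by_contra hxK
  exact hnx ⟨hxK, hΘ⟩
end

section
/- Let K ⊆ X be a subshift such that E_K is closed. Then K has property G. -/
variable {A : Type*}

theorem exitSet_closed_imp_propertyG
    [Nonempty A] [Countable A] [TopologicalSpace A] [DiscreteTopology A]
    (K : Set (ℕ → A)) (hK : IsSubshift K) (h : IsClosed (exitSet K)) :
    PropertyG K := by
  rintro ⟨x, hx⟩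
  obtain ⟨hcl, hne, hsh⟩ := hK
  have hx' : ∀ a, extend x a ∈ exitSet K := fun a => h.closure_subset (hx a)
  have hxK : x ∈ K := by
    have := (hx' (Classical.arbitrary A)).2
    exact this
  rw [← hsh] at hxK
  obtain ⟨y, hyK, hyx⟩ := hxK
  have hy : y = extend x (y 0) := by
    funext n
    cases n with
    | zero => rfl
    | succ n => simpa [shiftMap, extend] using congrFun hyx n
  exact (hx' (y 0)).1 (hy ▸ hyK)
end

section
/- Let A = {0,1} and let K be the even shift, i.e., K = {x ∈ X : for all i < j, if x i = 1 and x j = 1 and x k = 0 for every k with i < k < j, then j − i − 1 is even}. Then every x ∈ E_K satisfies x 0 = 1; moreover, if (x,a) ∈ closure(E_K) then a = 1, and hence K has property G. -/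
variable {A : Type*}

/-- The even shift over `A = {0,1}`: between any two 1s there is an even number of 0s. -/
def evenShift : Set (ℕ → Fin 2) :=
  {x | ∀ i j : ℕ, i < j → x i = 1 → x j = 1 →
    (∀ k : ℕ, i < k → k < j → x k = 0) → Even (j - i - 1)}


lemma exit_head : ∀ x ∈ exitSet evenShift, x 0 = 1 := by
  intro x ⟨hx, hs⟩
  by_contra h0
  have hx0 : x 0 = 0 := by omega
  apply hx
  intro i j hij h1 h2 hgap
  match i, hij with
  | 0, _ => rw [hx0] at h1; exact absurd h1 (by decide)
  | (i'+1), hij =>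
    obtain ⟨j', rfl⟩ : ∃ j', j = j' + 1 := ⟨j - 1, by omega⟩
    have := hs i' j' (by omega) h1 h2 (fun k hk1 hk2 =>
      hgap (k+1) (by omega) (by omega))
    have heq : j' + 1 - (i' + 1) - 1 = j' - i' - 1 := by omega
    rwa [heq]

lemma closure_head : ∀ (x : ℕ → Fin 2) (a : Fin 2),
    extend x a ∈ closure (exitSet evenShift) → a = 1 := by
  intro x a hmem
  have hsub : closure (exitSet evenShift) ⊆ {y : ℕ → Fin 2 | y 0 = 1} := by
    apply closure_minimal
    · intro y hy; exact exit_head y hy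
    · exact isClosed_eq (continuous_apply 0) continuous_const
  exact hsub hmem

theorem evenShift_propertyG :
    (∀ x ∈ exitSet evenShift, x 0 = 1) ∧
      (∀ (x : ℕ → Fin 2) (a : Fin 2),
        extend x a ∈ closure (exitSet evenShift) → a = 1) ∧
      PropertyG evenShift := by
  refine ⟨exit_head, closure_head, ?_⟩
  rintro ⟨x, hx⟩
  have := closure_head x 0 (hx 0)
  exact absurd this (by decide)
end

section
/- Let M ≥ 1 and let F be a set of words over A each of length at most M, with K = X_F nonempty. Then ρ(x,y) ≥ 2^{−M} for every x ∈ E_K and every y ∈ K; in particular K ∩ closure(E_K) = ∅. -/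
variable {A : Type*}

open scoped Classical in
/-- The metric `ρ(x, x') = 2^{-l(x,x')}` on `X`, where
`l(x,x') = min {n : x n ≠ x' n}`, and `ρ(x, x) = 0`. -/
noncomputable def rho (x y : ℕ → A) : ℝ :=
  if h : x = y then 0 else (2 : ℝ) ^ (-(Nat.find (Function.ne_iff.mp h) : ℤ))

lemma core_disagree {M : ℕ} {F : Set (List A)} (hW : ∀ w ∈ F, w ≠ [] ∧ w.length ≤ M)
    {x y : ℕ → A} (hx : x ∈ exitSet (XofF F)) (hy : y ∈ XofF F) :
    ∃ n < M, x n ≠ y n := by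
  obtain ⟨hx1, hx2⟩ := hx
  simp only [XofF, Set.mem_setOf_eq] at hx1
  push_neg at hx1
  obtain ⟨w, hwF, i, hi⟩ := hx1
  obtain ⟨hwne, hwlen⟩ := hW w hwF
  have hi0 : i = 0 := by
    by_contra h
    obtain ⟨j, rfl⟩ := Nat.exists_eq_succ_of_ne_zero h
    refine hx2 w hwF ⟨j, fun k hk => ?_⟩
    have := hi k hk
    simp only [shiftMap]
    rw [show j + k + 1 = j + 1 + k by omega]
    exact this
  subst hi0
  by_contra h
  push_neg at h
  refine hy w hwF ⟨0, fun k hk => ?_⟩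
  rw [show (0:ℕ) + k = k by omega, ← h k (lt_of_lt_of_le hk hwlen)]
  have := hi k hk
  rwa [show (0:ℕ) + k = k by omega] at this

theorem Mstep_dist_ge
    [Nonempty A] [Countable A] [TopologicalSpace A] [DiscreteTopology A]
    (M : ℕ) (hM : 1 ≤ M) (F : Set (List A))
    (hW : ∀ w ∈ F, w ≠ [] ∧ w.length ≤ M)
    (hne : (XofF F).Nonempty) :
    (∀ x ∈ exitSet (XofF F), ∀ y ∈ XofF F, (2 : ℝ) ^ (-(M : ℤ)) ≤ rho x y) ∧
      XofF F ∩ closure (exitSet (XofF F)) = ∅ := by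
  have key : ∀ x ∈ exitSet (XofF F), ∀ y ∈ XofF F, (2 : ℝ) ^ (-(M : ℤ)) ≤ rho x y := by
    intro x hx y hy
    classical
    obtain ⟨n, hn, hxy⟩ := core_disagree hW hx hy
    have hne' : x ≠ y := fun h => hxy (congrFun h n)
    rw [rho, dif_neg hne']
    apply zpow_le_zpow_right₀ (by norm_num : (1:ℝ) ≤ 2)
    have hfind : Nat.find (Function.ne_iff.mp hne') ≤ n := Nat.find_le hxy
    omega
  refine ⟨key, ?_⟩
  ext y
  simp only [Set.mem_inter_iff, Set.mem_empty_iff_false, iff_false]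
  rintro ⟨hyK, hycl⟩
  have hU : IsOpen {z : ℕ → A | ∀ n < M, z n = y n} := by
    have heq : {z : ℕ → A | ∀ n < M, z n = y n} = ⋂ n ∈ Finset.range M, {z | z n = y n} := by
      ext z; simp
    rw [heq]
    refine isOpen_biInter_finset fun n _ => ?_
    show IsOpen ((fun z : ℕ → A => z n) ⁻¹' {y n})
    exact (isOpen_discrete _).preimage (continuous_apply n)
  obtain ⟨x, hxU, hxE⟩ := mem_closure_iff.mp hycl _ hU (fun n _ => rfl)
  obtain ⟨n, hn, hne2⟩ := core_disagree hW hxE hyK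
  exact hne2 (hxU n hn)
end

section
/- Let A be countably infinite, fix a ∈ A, and let K = {x̄} where x̄ ∈ X is the constant sequence with x̄(n) = a for all n. Then K is a subshift, E_K is closed and K ∩ closure(E_K) = ∅, but K is not of finite type. -/
variable {A : Type*}

theorem singleton_subshift_not_finiteType
    [Nonempty A] [Countable A] [Infinite A] [TopologicalSpace A] [DiscreteTopology A]
    (a : A) :
    IsSubshift ({fun _ : ℕ => a} : Set (ℕ → A)) ∧
      IsClosed (exitSet ({fun _ : ℕ => a} : Set (ℕ → A))) ∧
      ({fun _ : ℕ => a} : Set (ℕ → A)) ∩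
          closure (exitSet ({fun _ : ℕ => a} : Set (ℕ → A))) = ∅ ∧
      ¬ IsFiniteType ({fun _ : ℕ => a} : Set (ℕ → A)) := by
  have hE : exitSet ({fun _ : ℕ => a} : Set (ℕ → A)) =
      ((fun x : ℕ → A => x 0) ⁻¹' {a}ᶜ) ∩
        ⋂ n : ℕ, (fun x : ℕ → A => x (n + 1)) ⁻¹' {a} := by
    ext x
    simp only [exitSet, Set.mem_setOf_eq, Set.mem_singleton_iff, Set.mem_inter_iff,
      Set.mem_preimage, Set.mem_compl_iff, Set.mem_iInter]
    constructor
    · rintro ⟨hne, hsh⟩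
      have h1 : ∀ n, x (n + 1) = a := fun n => congrFun hsh n
      refine ⟨fun h0 => hne (funext fun n => ?_), h1⟩
      cases n with
      | zero => exact h0
      | succ m => exact h1 m
    · rintro ⟨h0, h1⟩
      exact ⟨fun h => h0 (congrFun h 0), funext fun n => h1 n⟩
  have hEclosed : IsClosed (exitSet ({fun _ : ℕ => a} : Set (ℕ → A))) := by
    rw [hE]
    exact (IsClosed.preimage (continuous_apply 0) (isClosed_discrete _)).inter
      (isClosed_iInter fun n =>
        IsClosed.preimage (continuous_apply (n + 1)) (isClosed_discrete _))
  refine ⟨⟨isClosed_singleton, Set.singleton_nonempty _, ?_⟩, hEclosed, ?_, ?_⟩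
  · rw [Set.image_singleton]
    congr 1
  · rw [hEclosed.closure_eq, hE]
    ext x
    simp only [Set.mem_inter_iff, Set.mem_singleton_iff, Set.mem_preimage, Set.mem_compl_iff,
      Set.mem_empty_iff_false, iff_false, not_and]
    rintro rfl h0
    exact absurd rfl h0
  · rintro ⟨F, hF, hne, hKF⟩
    have hxbar : (fun _ : ℕ => a) ∈ XofF F := by
      rw [← hKF]; exact rfl
    -- pick a symbol b not equal to a and not occurring in any word of F
    have hS : ({a} ∪ ⋃ w ∈ F, {b : A | b ∈ w}).Finite :=
      (Set.finite_singleton a).union (hF.biUnion fun w _ => w.finite_toSet)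
    obtain ⟨b, hb⟩ := hS.infinite_compl.nonempty
    simp only [Set.mem_compl_iff, Set.mem_union, Set.mem_singleton_iff, Set.mem_iUnion,
      Set.mem_setOf_eq, not_or, not_exists] at hb
    obtain ⟨hba, hbw⟩ := hb
    set x : ℕ → A := extend (fun _ => a) b with hxdef
    have hx0 : x 0 = b := rfl
    have hxs : ∀ n, x (n + 1) = a := fun n => rfl
    have hxmem : x ∈ XofF F := by
      intro w hw ⟨i, hi⟩
      cases i with
      | zero =>
        have hlen : 0 < w.length := List.length_pos_iff.mpr (hne w hw)
        have hb2 : w.get ⟨0, hlen⟩ = b := (hi 0 hlen).symm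
        exact hbw w hw (hb2 ▸ List.get_mem w ⟨0, hlen⟩)
      | succ m =>
        refine hxbar w hw ⟨0, fun k hk => ?_⟩
        have := hi k hk
        rw [show m + 1 + k = (m + k) + 1 from by omega, hxs (m + k)] at this
        exact this
    rw [← hKF, Set.mem_singleton_iff] at hxmem
    exact hba (by rw [← hx0, hxmem])
end

section
/- Let F be a set of words over A such that for any two distinct words w, w' ∈ F, no symbol occurring in w occurs in w' (the symbol sets of distinct words of F are pairwise disjoint). Then X_F ∩ closure(E_{X_F}) = ∅, even if F contains arbitrarily long words. -/
variable {A : Type*}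

theorem disjoint_symbols_imp_disjoint_closure
    [Nonempty A] [Countable A] [TopologicalSpace A] [DiscreteTopology A]
    (F : Set (List A)) (hW : ∀ w ∈ F, w ≠ [])
    (hdisj : ∀ w ∈ F, ∀ w' ∈ F, w ≠ w' → ∀ s : A, s ∈ w → s ∉ w') :
    XofF F ∩ closure (exitSet (XofF F)) = ∅ := by
  ext x
  simp only [Set.mem_inter_iff, Set.mem_empty_iff_false, iff_false, not_and]
  intro hxF hxc
  -- key: for any N, there is y in the exit set agreeing with x on [0, N],
  -- together with a forbidden word appearing at position 0 of y
  have key : ∀ N : ℕ, ∃ y : ℕ → A, (∀ k ≤ N, y k = x k) ∧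
      ∃ w ∈ F, ∀ k : ℕ, ∀ h : k < w.length, y k = w.get ⟨k, h⟩ := by
    intro N
    have hUeq : {y : ℕ → A | ∀ k ≤ N, y k = x k}
        = Set.pi (↑(Finset.range (N + 1))) (fun k => {x k}) := by
      ext y
      simp [Set.mem_pi, Nat.lt_succ_iff]
    have hU : IsOpen {y : ℕ → A | ∀ k ≤ N, y k = x k} := by
      rw [hUeq]
      exact isOpen_set_pi (Finset.finite_toSet _) (fun k _ => isOpen_discrete _)
    have hxU : x ∈ {y : ℕ → A | ∀ k ≤ N, y k = x k} := fun k _ => rfl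
    obtain ⟨y, hyU, hyE⟩ := mem_closure_iff.mp hxc _ hU hxU
    refine ⟨y, hyU, ?_⟩
    obtain ⟨hyn, hys⟩ := hyE
    simp only [XofF, Set.mem_setOf_eq, not_forall, not_not] at hyn
    obtain ⟨w, hwF, i, hi⟩ := hyn
    refine ⟨w, hwF, ?_⟩
    rcases i with _ | j
    · intro k h; simpa using hi k h
    · exfalso
      exact hys w hwF ⟨j, fun k h => by
        have := hi k h
        simpa [shiftMap, Nat.succ_add, Nat.add_right_comm] using this⟩
  obtain ⟨y₁, hy₁x, w, hwF, hw₁⟩ := key 0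
  have hw0 : 0 < w.length := List.length_pos_iff.mpr (hW w hwF)
  have hx0w : x 0 ∈ w := by
    have : w.get ⟨0, hw0⟩ = x 0 := by rw [← hw₁ 0 hw0, hy₁x 0 le_rfl]
    rw [← this]; exact List.get_mem _ _
  obtain ⟨y, hyx, w', hw'F, hw'⟩ := key w.length
  have hw'0 : 0 < w'.length := List.length_pos_iff.mpr (hW w' hw'F)
  have hx0w' : x 0 ∈ w' := by
    have : w'.get ⟨0, hw'0⟩ = x 0 := by rw [← hw' 0 hw'0, hyx 0 (Nat.zero_le _)]
    rw [← this]; exact List.get_mem _ _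
  have hww' : w = w' := by
    by_contra hne
    exact hdisj w hwF w' hw'F hne (x 0) hx0w hx0w'
  subst hww'
  exact hxF w hwF ⟨0, fun k h => by
    rw [Nat.zero_add, ← hyx k (Nat.le_of_lt h)]; exact hw' k h⟩
end
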